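/- arXiv:2503.22385 — 5 statements merged into one kernel-verified Lean document; each statement's English description precedes it below -/
import Mathlib

section
/- Let V be a finite vertex set, let G be a tree (connected acyclic simple graph) on V with a distinguished vertex r, and let B be a complex matrix indexed by V × Fin 3 that is G-invertible. Let W be a positive semidefinite complex matrix indexed by V × Fin 3 such that W (r,a) (r,b) = v a * conj (v b) for all a, b ∈ Fin 3, where v : Fin 3 → ℂ is a nonzero vector, and suppose trace (B * W) = 0. Then there exists a vector u : V × Fin 3 → ℂ with u (r,a) = v a for all a ∈ Fin 3 and W (i,a) (j,b) = u (i,a) * conj (u (j,b)) for all (i,a), (j,b); in particular, W has rank 1. (This is the matrix-theoretic content of Theorem 2: the optimal solution of the penalized SDP relaxation PE(u) satisfies the rank-1 constraint and recovers a vector of nodal voltages whose slack-bus block equals the prescribed reference voltage.) -/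
open Matrix
open scoped ComplexOrder

/-- The `(i,j)` block of a matrix indexed by `V × Fin 3`:
the 3×3 matrix `(a,b) ↦ X (i,a) (j,b)`. -/
def blockOf {V : Type*} (X : Matrix (V × Fin 3) (V × Fin 3) ℂ) (i j : V) :
    Matrix (Fin 3) (Fin 3) ℂ :=
  Matrix.of fun a b => X (i, a) (j, b)

/-- `X` is `G`-invertible: `X` is positive semidefinite, its blocks on edges of
`G` are invertible, and its blocks on non-adjacent pairs of distinct vertices
vanish. -/
def GInvertible {V : Type*} [Fintype V] [DecidableEq V] (G : SimpleGraph V)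
    (X : Matrix (V × Fin 3) (V × Fin 3) ℂ) : Prop :=
  X.PosSemidef ∧
  (∀ i j : V, G.Adj i j → IsUnit (blockOf X i j)) ∧
  (∀ i j : V, i ≠ j → ¬ G.Adj i j → blockOf X i j = 0)

/-!
Both `B` and `W` are positive semidefinite, so `trace (B * W) = 0` forces `B * W = 0`: every
column of `W` lies in `ker B`. On a tree, a vector `x ∈ ker B` vanishing at the root vanishes
everywhere. Indeed, if `x` vanishes at `p` and `p – i` is an edge, cut this bridge: by the block
sparsity of `B`, the restriction of `x` to the side containing `i` still has zero quadratic form,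
hence lies in `ker B`, and its row at `p` reads `B_{pi} x_i = 0` with `B_{pi}` invertible.
Positive semidefiniteness of `W` together with its rank-one root block `v vᴴ` makes the root rows
of `W` proportional to `v`, so every column of `W` agrees at the root with a multiple of one fixed
column `u`, and therefore equals that multiple.
-/

namespace Matrix

variable {n m 𝕜 : Type*} [Fintype n] [RCLike 𝕜]

theorem PosSemidef.exists_eq_conjTranspose_mul_self {A : Matrix n n 𝕜} (hA : A.PosSemidef) :
    ∃ C : Matrix n n 𝕜, A = Cᴴ * C := by
  classical
  open scoped MatrixOrder in
  obtain ⟨C, rfl⟩ := CStarAlgebra.nonneg_iff_eq_star_mul_self.mp hA.nonneg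
  exact ⟨C, rfl⟩

theorem PosSemidef.mul_eq_zero_of_trace_mul_eq_zero {A B : Matrix n n 𝕜} (hA : A.PosSemidef)
    (hB : B.PosSemidef) (h : (A * B).trace = 0) : A * B = 0 := by
  obtain ⟨C, rfl⟩ := hA.exists_eq_conjTranspose_mul_self
  obtain ⟨D, rfl⟩ := hB.exists_eq_conjTranspose_mul_self
  have hCD : C * Dᴴ = 0 := by
    rw [← trace_mul_conjTranspose_self_eq_zero_iff, conjTranspose_mul,
      conjTranspose_conjTranspose, ← h, ← Matrix.mul_assoc, trace_mul_comm]
    simp only [Matrix.mul_assoc]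
  rw [Matrix.mul_assoc, ← Matrix.mul_assoc C, hCD, Matrix.zero_mul, Matrix.mul_zero]

theorem PosSemidef.mulVec_indicator_eq_zero {B : Matrix n n 𝕜} (hB : B.PosSemidef)
    {x : n → 𝕜} (hx : B *ᵥ x = 0) {T : Set n}
    (hT : ∀ s ∈ T, ∀ t ∉ T, B s t * x t = 0) :
    B *ᵥ T.indicator x = 0 := by
  have hrow : ∀ s ∈ T, (B *ᵥ T.indicator x) s = 0 := by
    intro s hs
    have hdiff : (B *ᵥ (x - T.indicator x)) s = 0 := by
      refine Finset.sum_eq_zero fun t _ => ?_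
      by_cases ht : t ∈ T
      · simp [ht]
      · simpa [ht] using hT s hs t ht
    rwa [mulVec_sub, hx, Pi.sub_apply, Pi.zero_apply, zero_sub, neg_eq_zero] at hdiff
  refine (hB.dotProduct_mulVec_zero_iff _).mp (Finset.sum_eq_zero fun s _ => ?_)
  by_cases hs : s ∈ T
  · rw [hrow s hs, mul_zero]
  · simp [hs]

theorem PosSemidef.rows_proportional_of_principal_eq_vecMulVec {W : Matrix n n 𝕜}
    (hW : W.PosSemidef) {s t : n} {α β : 𝕜} (hss : W s s = α * star α)
    (hst : W s t = α * star β) (hts : W t s = β * star α) (htt : W t t = β * star β) (q : n) :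
    β * W s q = α * W t q := by
  classical
  -- `ξ` is supported on `{s, t}`, where `W` is `(α, β)(α, β)ᴴ`, which kills `ξ`.
  set ξ : n → 𝕜 := Pi.single t (star α) - Pi.single s (star β)
  have hξ : W *ᵥ ξ = 0 := by
    refine (hW.dotProduct_mulVec_zero_iff ξ).mp ?_
    simp only [ξ, mulVec_sub, mulVec_single, star_sub, Pi.star_single, sub_dotProduct,
      dotProduct_sub, single_dotProduct]
    simp only [RCLike.star_def, RingHomCompTriple.comp_apply, RingHom.id_apply, Pi.smul_apply,
      col_apply, MulOpposite.smul_eq_mul_unop, MulOpposite.unop_op, hss, hst, hts, htt]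
    ring
  have hq : star α * W q t - star β * W q s = 0 := by
    simpa [ξ, mulVec_sub, mulVec_single] using congrFun hξ q
  have := congrArg star hq
  simp only [star_sub, star_mul', star_star, hW.1.apply, star_zero] at this
  linear_combination -this

theorem exists_eq_vecMulVec_star_of_mul_eq_zero {B W : Matrix n n 𝕜} (hBW : B * W = 0)
    (hW : W.PosSemidef) (ι : m → n)
    (hker : ∀ x, B *ᵥ x = 0 → (∀ a, x (ι a) = 0) → x = 0)
    {v : m → 𝕜} (hv : v ≠ 0) (hWι : ∀ a b, W (ι a) (ι b) = v a * star (v b)) :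
    ∃ u : n → 𝕜, (∀ a, u (ι a) = v a) ∧ W = vecMulVec u (star u) := by
  classical
  obtain ⟨a₀, ha₀⟩ : ∃ a, v a ≠ 0 := Function.ne_iff.mp hv
  have hcol : ∀ q, B *ᵥ W.col q = 0 := fun q => by
    rw [← mulVec_single_one, mulVec_mulVec, hBW, zero_mulVec]
  set u : n → 𝕜 := (star (v a₀))⁻¹ • W.col (ι a₀)
  have hu : ∀ a, u (ι a) = v a := fun a => by
    simp only [u, Pi.smul_apply, col_apply, smul_eq_mul, hWι]
    rw [mul_comm (v a), inv_mul_cancel_left₀ (star_ne_zero.mpr ha₀)]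
  have hstar : ∀ q, star (u q) = (v a₀)⁻¹ * W (ι a₀) q := fun q => by
    simp [u, ← hW.1.apply (ι a₀) q]
  refine ⟨u, hu, ext fun p q => ?_⟩
  have hzero : W.col q - star (u q) • u = 0 := by
    refine hker _ ?_ fun a => ?_
    · rw [mulVec_sub, mulVec_smul, hcol, mulVec_smul, hcol, smul_zero, smul_zero, sub_zero]
    · have := hW.rows_proportional_of_principal_eq_vecMulVec (hWι a a) (hWι a a₀) (hWι a₀ a)
        (hWι a₀ a₀) q
      simp only [Pi.sub_apply, Pi.smul_apply, col_apply, smul_eq_mul, hu, hstar]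
      field_simp
      linear_combination this
  simpa [sub_eq_zero, vecMulVec_apply, mul_comm] using congrFun hzero p

theorem rank_vecMulVec_eq_one {K : Type*} [Field K] {w : m → K} {v : n → K}
    (hw : w ≠ 0) (hv : v ≠ 0) : (vecMulVec w v).rank = 1 := by
  classical
  refine le_antisymm (rank_vecMulVec_le w v) (Nat.one_le_iff_ne_zero.mpr fun h => ?_)
  obtain ⟨i, hi⟩ : ∃ i, w i ≠ 0 := Function.ne_iff.mp hw
  obtain ⟨j, hj⟩ : ∃ j, v j ≠ 0 := Function.ne_iff.mp hv
  have hrange : LinearMap.range (vecMulVec w v).mulVecLin = ⊥ := Submodule.finrank_eq_zero.mp h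
  have hcol : (vecMulVec w v) *ᵥ Pi.single j 1 = 0 :=
    (Submodule.eq_bot_iff _).mp hrange _ (LinearMap.mem_range_self _ _)
  exact mul_ne_zero hi hj (by simpa [vecMulVec_apply] using congrFun hcol i)

end Matrix

namespace SimpleGraph

variable {V : Type*} {G : SimpleGraph V}

theorem Preconnected.induction_on (hG : G.Preconnected) {P : V → Prop} {r : V} (hr : P r)
    (hadj : ∀ ⦃p i⦄, G.Adj p i → P p → P i) (i : V) : P i := by
  obtain ⟨w⟩ := hG r i
  induction w with
  | nil => exact hr
  | cons h _ ih => exact ih (hadj h hr)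

theorem eq_of_adj_of_reachable_deleteEdges {p i u w : V}
    (hu : (G.deleteEdges {s(p, i)}).Reachable i u) (hw : ¬ (G.deleteEdges {s(p, i)}).Reachable i w)
    (huw : G.Adj u w) : u = i ∧ w = p := by
  have hedge : s(u, w) = s(p, i) := by
    by_contra hne
    exact hw (hu.trans (Adj.reachable (by simpa [deleteEdges_adj, huw] using hne)))
  rcases Sym2.eq_iff.mp hedge with ⟨rfl, rfl⟩ | ⟨rfl, rfl⟩
  · exact absurd (Reachable.refl _) hw
  · exact ⟨rfl, rfl⟩

end SimpleGraph

namespace GInvertible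

variable {V : Type*} [Fintype V] [DecidableEq V] {G : SimpleGraph V}
  {B : Matrix (V × Fin 3) (V × Fin 3) ℂ}

theorem apply_eq_zero (hB : GInvertible G B) {i j : V} (hij : i ≠ j) (hadj : ¬ G.Adj i j)
    (a b : Fin 3) : B (i, a) (j, b) = 0 :=
  congrFun (congrFun (hB.2.2 i j hij hadj) a) b

theorem apply_eq_zero_of_adj (hG : G.IsAcyclic) (hB : GInvertible G B) {x : V × Fin 3 → ℂ}
    (hx : B *ᵥ x = 0) {p i : V} (hpi : G.Adj p i) (hp : ∀ a, x (p, a) = 0) (a : Fin 3) :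
    x (i, a) = 0 := by
  set H := G.deleteEdges {s(p, i)}
  have hpT : ¬ H.Reachable i p := by
    rw [SimpleGraph.reachable_comm]
    exact SimpleGraph.isAcyclic_iff_forall_adj_isBridge.mp hG hpi
  set T : Set (V × Fin 3) := {q | H.Reachable i q.1}
  have hy : B *ᵥ T.indicator x = 0 := by
    refine hB.1.mulVec_indicator_eq_zero hx ?_
    rintro ⟨s, a⟩ (hs : H.Reachable i s) ⟨t, b⟩ (ht : ¬ H.Reachable i t)
    by_cases hadj : G.Adj s t
    · rw [(SimpleGraph.eq_of_adj_of_reachable_deleteEdges hs ht hadj).2, hp b, mul_zero]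
    · have hne : s ≠ t := by rintro rfl; exact ht hs
      rw [hB.apply_eq_zero hne hadj, zero_mul]
  have hblock : blockOf B p i *ᵥ (fun b => x (i, b)) = 0 := by
    funext a'
    have hrow := congrFun hy (p, a')
    rw [mulVec, dotProduct, Fintype.sum_prod_type, Finset.sum_eq_single i] at hrow
    · simpa [T, blockOf, mulVec, dotProduct] using hrow
    · intro w _ hwi
      refine Finset.sum_eq_zero fun b _ => ?_
      by_cases hw : H.Reachable i w
      · have hadj : ¬ G.Adj p w := fun h =>
          hwi (SimpleGraph.eq_of_adj_of_reachable_deleteEdges hw hpT h.symm).1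
        have hpw : p ≠ w := by rintro rfl; exact hpT hw
        rw [hB.apply_eq_zero hpw hadj, zero_mul]
      · simp [T, hw]
    · simp
  exact congrFun ((mulVec_injective_of_isUnit (hB.2.1 p i hpi)).eq_iff.mp
    (hblock.trans (mulVec_zero _).symm)) a

theorem eq_zero_of_mulVec_eq_zero (hG : G.IsTree) (hB : GInvertible G B) {x : V × Fin 3 → ℂ}
    (hx : B *ᵥ x = 0) {r : V} (hr : ∀ a, x (r, a) = 0) : x = 0 :=
  funext fun q => hG.connected.preconnected.induction_on (P := fun i => ∀ a, x (i, a) = 0) hr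
    (fun _ _ hpi hp => hB.apply_eq_zero_of_adj hG.isAcyclic hx hpi hp) q.1 q.2

end GInvertible

/-- **Theorem 2 (matrix-theoretic content).** Over a tree `G`, if `B` is
`G`-invertible, `W` is positive semidefinite with slack-bus block
`W (r,a) (r,b) = v a * conj (v b)` for a nonzero reference voltage `v`, and
`trace (B * W) = 0`, then `W = u uᴴ` for a vector `u` of nodal voltages whose
slack-bus block equals `v`; in particular `W` has rank 1. -/
theorem penalized_sdp_relaxation_exact
    {V : Type*} [Fintype V] [DecidableEq V]
    (G : SimpleGraph V) (hG : G.IsTree) (r : V)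
    (B W : Matrix (V × Fin 3) (V × Fin 3) ℂ)
    (hB : GInvertible G B)
    (hW : W.PosSemidef)
    (v : Fin 3 → ℂ) (hv : v ≠ 0)
    (hW00 : ∀ a b : Fin 3, W (r, a) (r, b) = v a * starRingEnd ℂ (v b))
    (htr : Matrix.trace (B * W) = 0) :
    (∃ u : V × Fin 3 → ℂ,
      (∀ a : Fin 3, u (r, a) = v a) ∧
      (∀ p q : V × Fin 3, W p q = u p * starRingEnd ℂ (u q))) ∧
    W.rank = 1 := by
  have hBW : B * W = 0 := hB.1.mul_eq_zero_of_trace_mul_eq_zero hW htr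
  obtain ⟨u, hur, rfl⟩ := exists_eq_vecMulVec_star_of_mul_eq_zero hBW hW (fun a => (r, a))
    (fun _ hx hr => hB.eq_zero_of_mulVec_eq_zero hG hx hr) hv hW00
  have hu : u ≠ 0 := fun h => hv (funext fun a => by rw [← hur a, h]; rfl)
  exact ⟨⟨u, hur, fun _ _ => rfl⟩, rank_vecMulVec_eq_one hu (star_ne_zero.mpr hu)⟩
end

section
/- Let y be a 3×3 complex matrix with yᵀ = y, and let g be its entrywise real part (g i j = Re (y i j)). Suppose g is strictly row diagonally dominant: for every index i, ∑_{j ≠ i} |g i j| < |g i i|. Then there exists β > 0 such that for all d₁, d₂ : Fin 3 → ℂ satisfying ‖d₁ φ + 1‖ ≤ β and ‖d₂ φ + 1‖ ≤ β for every φ ∈ Fin 3, the matrix diagonal(d₁) * ((1/2) • y) + ((1/2) • yᴴ) * diagonal(d₂) is invertible. (This is the rigorous form of Proposition 3: under Assumption 1, for sufficiently small penalty weight β the edge blocks [B]_{ij} of any dual-feasible matrix B of DE(u) are invertible, hence B is G-invertible.) -/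
/-!
At `d₁ = d₂ = -1` the edge block is `-(y + yᴴ)/2`, which for symmetric `y` is `-g`; a strictly
diagonally dominant matrix is nonsingular, and nonsingularity is an open condition, so it persists
for all `d₁, d₂` close enough to `-1`.
-/

open Matrix Finset Topology

section

variable {n : Type*} [Fintype n] [DecidableEq n]

/-- The edge block `[B]_{ij}` of eq. (17). -/
noncomputable def edgeBlock (y : Matrix n n ℂ) (d₁ d₂ : n → ℂ) : Matrix n n ℂ :=
  diagonal d₁ * ((1 / 2 : ℂ) • y) + ((1 / 2 : ℂ) • yᴴ) * diagonal d₂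

theorem continuous_edgeBlock (y : Matrix n n ℂ) :
    Continuous fun d : (n → ℂ) × (n → ℂ) => edgeBlock y d.1 d.2 :=
  (continuous_fst.matrix_diagonal.matrix_mul continuous_const).add
    (continuous_const.matrix_mul continuous_snd.matrix_diagonal)

theorem edgeBlock_neg_one {y : Matrix n n ℂ} (hy : yᵀ = y) :
    edgeBlock y (fun _ => -1) (fun _ => -1) = -y.map fun z => (z.re : ℂ) := by
  ext i j
  have hji : y j i = y i j := congrFun (congrFun hy i) j
  simp only [edgeBlock, Matrix.add_apply, diagonal_mul, mul_diagonal, Matrix.smul_apply,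
    conjTranspose_apply, hji, Matrix.neg_apply, map_apply, Complex.re_eq_add_conj, smul_eq_mul,
    Complex.star_def]
  ring

end

theorem isUnit_of_sum_row_lt_diag {K n : Type*} [NormedField K] [Fintype n] [DecidableEq n]
    {A : Matrix n n K} (h : ∀ k, ∑ j ∈ univ.erase k, ‖A k j‖ < ‖A k k‖) : IsUnit A :=
  (isUnit_iff_isUnit_det A).2 (det_ne_zero_of_sum_row_lt_diag h).isUnit

theorem eventually_isUnit_of_continuousAt {X K n : Type*} [TopologicalSpace X] [Field K]
    [TopologicalSpace K] [IsTopologicalRing K] [T1Space K] [Fintype n] [DecidableEq n]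
    {f : X → Matrix n n K} {x : X} (hf : ContinuousAt f x) (hx : IsUnit (f x)) :
    ∀ᶠ x' in 𝓝 x, IsUnit (f x') := by
  have hdet : ContinuousAt (fun x' => (f x').det) x :=
    continuous_id.matrix_det.continuousAt.comp hf
  filter_upwards [hdet.eventually_ne ((isUnit_iff_isUnit_det _).1 hx).ne_zero] with x' hx'
  exact (isUnit_iff_isUnit_det _).2 hx'.isUnit

theorem dist_const_neg_one_le {ι : Type*} [Fintype ι] {β : ℝ} (hβ : 0 ≤ β)
    {d : ι → ℂ} (hd : ∀ φ, ‖d φ + 1‖ ≤ β) : dist d (fun _ => -1) ≤ β :=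
  (dist_pi_le_iff hβ).2 fun φ => by simpa [dist_eq_norm] using hd φ

/-- **Proposition 3 (rigorous form).** Let `y` be a symmetric 3×3 complex matrix
whose entrywise real part `g` is strictly row diagonally dominant. Then for a
sufficiently small penalty weight `β > 0`, whenever the diagonal multiplier
vectors `d₁, d₂` are within distance `β` of the constant `−1` vector, the edge
block `diagonal d₁ * ((1/2) • y) + ((1/2) • yᴴ) * diagonal d₂` is invertible. -/
theorem edge_block_invertible_for_small_beta
    (y : Matrix (Fin 3) (Fin 3) ℂ) (hy : yᵀ = y)
    (g : Matrix (Fin 3) (Fin 3) ℝ) (hg : ∀ i j, g i j = (y i j).re)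
    (hdom : ∀ i : Fin 3, ∑ j ∈ Finset.univ.erase i, |g i j| < |g i i|) :
    ∃ β : ℝ, 0 < β ∧ ∀ d₁ d₂ : Fin 3 → ℂ,
      (∀ φ : Fin 3, ‖d₁ φ + 1‖ ≤ β) → (∀ φ : Fin 3, ‖d₂ φ + 1‖ ≤ β) →
      IsUnit (Matrix.diagonal d₁ * ((1 / 2 : ℂ) • y)
        + ((1 / 2 : ℂ) • yᴴ) * Matrix.diagonal d₂) := by
  set p₀ : (Fin 3 → ℂ) × (Fin 3 → ℂ) := (fun _ => -1, fun _ => -1)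
  have hbase : IsUnit (edgeBlock y p₀.1 p₀.2) := by
    have hre : (y.map fun z => (z.re : ℂ)) = Complex.ofRealHom.mapMatrix g := by
      ext i j
      simp [hg]
    rw [edgeBlock_neg_one hy, hre]
    exact ((isUnit_of_sum_row_lt_diag (by simpa only [Real.norm_eq_abs] using hdom)).map _).neg
  obtain ⟨β, hβ, hball⟩ := Metric.nhds_basis_closedBall.eventually_iff.1 <|
    eventually_isUnit_of_continuousAt (continuous_edgeBlock y).continuousAt (x := p₀) hbase
  refine ⟨β, hβ, fun d₁ d₂ h₁ h₂ => hball (x := (d₁, d₂)) ?_⟩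
  rw [Metric.mem_closedBall, Prod.dist_eq]
  exact max_le (dist_const_neg_one_le hβ.le h₁) (dist_const_neg_one_le hβ.le h₂)
end

section
/- Let G be a finite simple graph on vertex set V and let X be a complex matrix indexed by V × Fin 3 that is G-invertible. Let ν : V × Fin 3 → ℂ be a nonzero vector with X.mulVec ν = 0, and suppose ν has minimal support among nonzero kernel vectors of X: for every nonzero μ : V × Fin 3 → ℂ with X.mulVec μ = 0, the cardinality of Ω(ν) is at most the cardinality of Ω(μ). Then the subgraph of G induced on Ω(ν) is connected; i.e., any two vertices of Ω(ν) are joined by a walk of G all of whose vertices lie in Ω(ν). (This is Proposition 4: each pair of buses in the support of a minimal-support kernel vector of a G-invertible matrix is connected within the support.) -/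
open Matrix
open scoped ComplexOrder

/-- The support `Ω(ν)` of a vector `ν : V × Fin 3 → ℂ`: the set of vertices
at which some phase of `ν` is nonzero. -/
def vertexSupport {V : Type*} (ν : V × Fin 3 → ℂ) : Set V :=
  {i : V | ∃ a : Fin 3, ν (i, a) ≠ 0}

/-- **Proposition 4.** If `X` is `G`-invertible and `ν` is a nonzero kernel
vector of `X` whose support `Ω(ν)` has minimal cardinality among all nonzero
kernel vectors, then any two vertices of `Ω(ν)` are joined by a walk of `G`
all of whose vertices lie in `Ω(ν)`. -/
theorem minimal_support_kernel_vector_connected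
    {V : Type*} [Fintype V] [DecidableEq V]
    (G : SimpleGraph V) (X : Matrix (V × Fin 3) (V × Fin 3) ℂ)
    (hX : GInvertible G X)
    (ν : V × Fin 3 → ℂ) (hν : ν ≠ 0) (hker : X.mulVec ν = 0)
    (hmin : ∀ μ : V × Fin 3 → ℂ, μ ≠ 0 → X.mulVec μ = 0 →
      (vertexSupport ν).ncard ≤ (vertexSupport μ).ncard) :
    ∀ i ∈ vertexSupport ν, ∀ j ∈ vertexSupport ν,
      ∃ w : G.Walk i j, ∀ x ∈ w.support, x ∈ vertexSupport ν := by
  classical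
  intro i hi j hj
  by_contra hcon
  push_neg at hcon
  obtain ⟨hpsd, -, hzero⟩ := hX
  set S : Set V := {k : V | ∃ w : G.Walk i k, ∀ x ∈ w.support, x ∈ vertexSupport ν}
    with hSdef
  have hiS : i ∈ S := ⟨SimpleGraph.Walk.nil, by
    intro x hx; simp at hx; subst hx; exact hi⟩
  have hSΩ : ∀ k ∈ S, k ∈ vertexSupport ν := by
    rintro k ⟨w, hw⟩
    exact hw k w.end_mem_support
  have hjS : j ∉ S := by
    rintro ⟨w, hw⟩
    obtain ⟨x, hx1, hx2⟩ := hcon w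
    exact hx2 (hw x hx1)
  set μ : V × Fin 3 → ℂ := fun p => if p.1 ∈ S then ν p else 0 with hμdef
  -- key: entries between S and its complement within the support vanish
  have hterm : ∀ k ∈ S, ∀ a : Fin 3, ∀ p : V × Fin 3,
      X (k, a) p * μ p = X (k, a) p * ν p := by
    intro k hk a p
    by_cases hp : p.1 ∈ S
    · simp [hμdef, hp]
    · simp only [hμdef, if_neg hp, mul_zero]
      by_cases hν0 : p.1 ∈ vertexSupport ν
      · have hne : k ≠ p.1 := fun h => hp (h ▸ hk)
        have hnadj : ¬ G.Adj k p.1 := by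
          intro hadj
          apply hp
          obtain ⟨w, hw⟩ := hk
          refine ⟨w.concat hadj, ?_⟩
          intro x hx
          rw [SimpleGraph.Walk.support_concat] at hx
          simp only [List.concat_eq_append, List.mem_append, List.mem_singleton] at hx
          rcases hx with hx | hx
          · exact hw x hx
          · subst hx; exact hν0
        have hb := hzero k p.1 hne hnadj
        have hXe : X (k, a) (p.1, p.2) = 0 := by
          have := congrFun (congrFun hb a) p.2
          simpa [blockOf] using this
        rw [show p = (p.1, p.2) from rfl, hXe, zero_mul]
      · have hνp : ν p = 0 := by
          by_contra h
          exact hν0 ⟨p.2, by simpa using h⟩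
        rw [hνp, mul_zero]
  have hμker : ∀ k ∈ S, ∀ a : Fin 3, X.mulVec μ (k, a) = 0 := by
    intro k hk a
    have : X.mulVec μ (k, a) = X.mulVec ν (k, a) := by
      simp only [Matrix.mulVec, dotProduct]
      exact Finset.sum_congr rfl fun p _ => hterm k hk a p
    rw [this, hker]
    rfl
  have hquad : star μ ⬝ᵥ X.mulVec μ = 0 := by
    simp only [dotProduct]
    apply Finset.sum_eq_zero
    intro p _
    by_cases hp : p.1 ∈ S
    · have : X.mulVec μ p = 0 := by
        rcases p with ⟨k, a⟩; exact hμker k hp a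
      rw [this, mul_zero]
    · simp [hμdef, if_neg hp]
  have hμ0 : X.mulVec μ = 0 := (hpsd.dotProduct_mulVec_zero_iff μ).mp hquad
  have hμne : μ ≠ 0 := by
    obtain ⟨a, ha⟩ := hi
    intro h
    apply ha
    have := congrFun h (i, a)
    simpa [hμdef, hiS] using this
  have hjμ : j ∉ vertexSupport μ := by
    rintro ⟨a, ha⟩
    exact ha (by simp [hμdef, hjS])
  have hsub : vertexSupport μ ⊆ vertexSupport ν := by
    rintro k ⟨a, ha⟩
    by_cases hk : k ∈ S
    · exact hSΩ k hk
    · exact absurd (by simp [hμdef, hk] : μ (k, a) = 0) ha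
  have hlt : (vertexSupport μ).ncard < (vertexSupport ν).ncard := by
    apply Set.ncard_lt_ncard
    · exact (Set.ssubset_iff_of_subset hsub).mpr ⟨j, hj, hjμ⟩
    · exact Set.toFinite _
  exact absurd (hmin μ hμne hμ0) (not_le.mpr hlt)
end

section
/- Let m be a finite type and let W be a positive semidefinite complex matrix indexed by Fin 3 ⊕ m, written in blocks W₀₀ (indexed Fin 3 × Fin 3), W₀₁ (indexed Fin 3 × m), W₁₀ = W₀₁ᴴ, and W₁₁ (indexed m × m). Suppose W₀₀ a b = v a * conj (v b) for all a, b ∈ Fin 3, where v : Fin 3 → ℂ is a nonzero vector. Then there exist a unique vector V̂ : m → ℂ and a unique positive semidefinite matrix Q : Matrix m m ℂ such that W₀₁ a k = v a * conj (V̂ k) for all a ∈ Fin 3, k ∈ m, and W₁₁ k l = V̂ k * conj (V̂ l) + Q k l for all k, l ∈ m. (This is the existence-and-uniqueness part of Lemma 2, describing the structure of any PSD matrix whose top-left block is the fixed rank-1 slack-bus block v_ref v_refᴴ.) -/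
open Matrix
open scoped ComplexOrder

/-!
If `x ⊥ v`, the vector `(x, 0)` has quadratic form `|vᴴ x|² = 0` for `W`, so `W (x, 0) = 0`
because `W` is positive semidefinite. Hence the lower-left block kills `v^⊥` and is
`V̂ vᴴ` with `V̂ = W₁₀ v / ‖v‖²`. The remainder `Q = W₁₁ - V̂ V̂ᴴ` is the congruence `Pᴴ W P`
with `P = (-v V̂ᴴ / ‖v‖², I)`, hence positive semidefinite. Uniqueness holds because
`w ↦ v wᴴ` is injective for `v ≠ 0`.
-/

namespace Matrix

theorem vecMulVec_right_injective {α m n : Type*} [MulZeroClass α] [IsLeftCancelMulZero α]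
    {v : m → α} (hv : v ≠ 0) : Function.Injective (vecMulVec v : (n → α) → Matrix m n α) := by
  obtain ⟨i, hi⟩ := Function.ne_iff.mp hv
  intro w w' h
  funext j
  exact mul_left_cancel₀ hi (congrFun₂ h i j)

theorem eq_vecMulVec_of_mulVec_eq_zero {𝕜 m n : Type*} [RCLike 𝕜] [Fintype n]
    {M : Matrix m n 𝕜} {v : n → 𝕜} (hv : v ≠ 0) (hM : ∀ x, star v ⬝ᵥ x = 0 → M *ᵥ x = 0) :
    M = vecMulVec ((star v ⬝ᵥ v)⁻¹ • M *ᵥ v) (star v) := by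
  have hvv : star v ⬝ᵥ v ≠ 0 := dotProduct_star_self_eq_zero.not.mpr hv
  refine ext_iff_mulVec.mpr fun y => ?_
  set c := (star v ⬝ᵥ v)⁻¹ * (star v ⬝ᵥ y)
  have hMy : M *ᵥ (y - c • v) = 0 := hM _ <| by
    simp only [c, dotProduct_sub, dotProduct_smul, smul_eq_mul]
    field_simp
    ring
  rw [mulVec_sub, mulVec_smul, sub_eq_zero] at hMy
  rw [hMy, vecMulVec_mulVec, op_smul_eq_smul, smul_smul, mul_comm]

variable {𝕜 n m : Type*} [RCLike 𝕜] {W : Matrix (n ⊕ m) (n ⊕ m) 𝕜} {v : n → 𝕜} {u : m → 𝕜}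

theorem IsHermitian.toBlocks₁₂_eq_vecMulVec (hW : W.IsHermitian)
    (h₂₁ : W.toBlocks₂₁ = vecMulVec u (star v)) : W.toBlocks₁₂ = vecMulVec v (star u) := by
  have h₁₂ : W.toBlocks₁₂ = W.toBlocks₂₁ᴴ := by
    ext i j
    exact (hW.apply _ _).symm
  rw [h₁₂, h₂₁, conjTranspose_vecMulVec, star_star]

variable [Fintype n] [Fintype m]

theorem PosSemidef.toBlocks₂₁_mulVec_eq_zero (hW : W.PosSemidef)
    (h₁₁ : W.toBlocks₁₁ = vecMulVec v (star v)) {x : n → 𝕜} (hx : star v ⬝ᵥ x = 0) :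
    W.toBlocks₂₁ *ᵥ x = 0 := by
  have hWx : W *ᵥ Sum.elim x 0 = Sum.elim (0 : n → 𝕜) (W.toBlocks₂₁ *ᵥ x) := by
    rw [← fromBlocks_toBlocks W, fromBlocks_mulVec, h₁₁]
    simp [vecMulVec_mulVec, hx]
  have hquad : star (Sum.elim x 0) ⬝ᵥ W *ᵥ Sum.elim x (0 : m → 𝕜) = 0 := by
    rw [hWx]
    simp [dotProduct, Fintype.sum_sum_type]
  rw [(hW.dotProduct_mulVec_zero_iff _).mp hquad, ← Sum.elim_zero_zero, Sum.elim_eq_iff] at hWx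
  exact hWx.2.symm

theorem PosSemidef.toBlocks₂₂_sub_vecMulVec (hW : W.PosSemidef) (hv : v ≠ 0)
    (h₁₁ : W.toBlocks₁₁ = vecMulVec v (star v)) (h₂₁ : W.toBlocks₂₁ = vecMulVec u (star v)) :
    (W.toBlocks₂₂ - vecMulVec u (star u)).PosSemidef := by
  classical
  have hvv : star v ⬝ᵥ v ≠ 0 := dotProduct_star_self_eq_zero.not.mpr hv
  have hreal : starRingEnd 𝕜 (star v ⬝ᵥ v) = star v ⬝ᵥ v :=
    (dotProduct_star_self_nonneg v).isSelfAdjoint.star_eq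
  set P : Matrix (n ⊕ m) m 𝕜 := fromRows (-(star v ⬝ᵥ v)⁻¹ • vecMulVec v (star u)) 1
  have hPWP : Pᴴ * W * P = W.toBlocks₂₂ - vecMulVec u (star u) := by
    rw [← fromBlocks_toBlocks W, h₁₁, hW.1.toBlocks₁₂_eq_vecMulVec h₂₁, h₂₁]
    simp [P, conjTranspose_fromRows_eq_fromCols_conjTranspose, fromCols_mul_fromBlocks,
      fromCols_mul_fromRows, vecMulVec_mul_vecMulVec, hreal, smul_smul, hvv, sub_eq_neg_add]
  exact hPWP ▸ hW.conjTranspose_mul_mul_same P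

theorem PosSemidef.existsUnique_of_toBlocks₁₁_eq_vecMulVec (hW : W.PosSemidef) (hv : v ≠ 0)
    (h₁₁ : W.toBlocks₁₁ = vecMulVec v (star v)) :
    ∃! p : (m → 𝕜) × Matrix m m 𝕜, p.2.PosSemidef ∧
      W.toBlocks₁₂ = vecMulVec v (star p.1) ∧ W.toBlocks₂₂ = vecMulVec p.1 (star p.1) + p.2 := by
  set V := (star v ⬝ᵥ v)⁻¹ • W.toBlocks₂₁ *ᵥ v
  have h₂₁ : W.toBlocks₂₁ = vecMulVec V (star v) :=
    eq_vecMulVec_of_mulVec_eq_zero hv fun _ hx => hW.toBlocks₂₁_mulVec_eq_zero h₁₁ hx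
  have h₁₂ := hW.1.toBlocks₁₂_eq_vecMulVec h₂₁
  refine ⟨(V, W.toBlocks₂₂ - vecMulVec V (star V)),
    ⟨hW.toBlocks₂₂_sub_vecMulVec hv h₁₁ h₂₁, h₁₂, (add_sub_cancel _ _).symm⟩, ?_⟩
  rintro ⟨V', Q'⟩ ⟨-, h₁₂', h₂₂'⟩
  obtain rfl : V' = V := star_injective (vecMulVec_right_injective hv (h₁₂'.symm.trans h₁₂))
  rw [h₂₂', add_sub_cancel_left]

end Matrix

theorem psd_slack_block_structure_general
    {m : Type*} [Fintype m]
    (W : Matrix (Fin 3 ⊕ m) (Fin 3 ⊕ m) ℂ) (hW : W.PosSemidef)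
    (v : Fin 3 → ℂ) (hv : v ≠ 0)
    (hW00 : ∀ a b : Fin 3, W (Sum.inl a) (Sum.inl b) = v a * starRingEnd ℂ (v b)) :
    ∃! p : (m → ℂ) × Matrix m m ℂ,
      p.2.PosSemidef ∧
      (∀ (a : Fin 3) (k : m),
        W (Sum.inl a) (Sum.inr k) = v a * starRingEnd ℂ (p.1 k)) ∧
      (∀ k l : m,
        W (Sum.inr k) (Sum.inr l) = p.1 k * starRingEnd ℂ (p.1 l) + p.2 k l) := by
  have h := hW.existsUnique_of_toBlocks₁₁_eq_vecMulVec hv (Matrix.ext hW00)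
  simp only [← Matrix.ext_iff] at h
  exact h

/-- **Lemma 2 (existence and uniqueness part).** Any PSD matrix `W` indexed by
`Fin 3 ⊕ m` whose top-left block is the fixed rank-1 slack-bus block
`v vᴴ` (with `v ≠ 0`) admits a unique vector `V̂ : m → ℂ` and a unique PSD
matrix `Q` such that `W₀₁ = v V̂ᴴ` and `W₁₁ = V̂ V̂ᴴ + Q`. -/
theorem psd_slack_block_structure
    {m : Type*} [Fintype m] [DecidableEq m]
    (W : Matrix (Fin 3 ⊕ m) (Fin 3 ⊕ m) ℂ) (hW : W.PosSemidef)
    (v : Fin 3 → ℂ) (hv : v ≠ 0)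
    (hW00 : ∀ a b : Fin 3, W (Sum.inl a) (Sum.inl b) = v a * starRingEnd ℂ (v b)) :
    ∃! p : (m → ℂ) × Matrix m m ℂ,
      p.2.PosSemidef ∧
      (∀ (a : Fin 3) (k : m),
        W (Sum.inl a) (Sum.inr k) = v a * starRingEnd ℂ (p.1 k)) ∧
      (∀ k l : m,
        W (Sum.inr k) (Sum.inr l) = p.1 k * starRingEnd ℂ (p.1 l) + p.2 k l) :=
  psd_slack_block_structure_general W hW v hv hW00
end

section
/- Let m be a finite type and let W be a positive semidefinite complex matrix indexed by Fin 3 ⊕ m whose top-left block satisfies W₀₀ a b = v a * conj (v b) for a nonzero vector v : Fin 3 → ℂ. Suppose V̂ : m → ℂ and a positive semidefinite Q : Matrix m m ℂ satisfy W₀₁ a k = v a * conj (V̂ k) and W₁₁ k l = V̂ k * conj (V̂ l) + Q k l for all indices (where W₀₁ and W₁₁ are the top-right and bottom-right blocks of W). Then rank W = 1 if and only if Q = 0. (This is the rank characterization part of Lemma 2.) -/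
open Matrix
open scoped ComplexOrder

/-!
With `u = (v, V̂)`, Hermitian symmetry gives `W = u uᴴ + diag(0, Q)`. If `rank W = 1`, every
`2 × 2` minor of `W` vanishes; the one on rows `(b, k)` and columns `(b, l)`, with `v b ≠ 0`,
equals `|v b|² Q k l`. Conversely, if `Q = 0` then `W = u uᴴ` has rank at most one, and its
entry `|v b|²` is nonzero.
-/

namespace Matrix

section Rank

variable {m n K : Type*} [Field K] [Fintype n]

theorem one_le_rank_of_apply_ne_zero (A : Matrix m n K) {i : m} {j : n} (h : A i j ≠ 0) :
    1 ≤ A.rank := by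
  have hsub := rank_submatrix_le A (fun _ : Unit => i) (fun _ : Unit => j)
  rwa [rank_of_det_ne_zero (by simpa using h), Fintype.card_unit] at hsub

theorem mul_apply_eq_of_rank_le_one (A : Matrix m n K) (hA : A.rank ≤ 1) (i k : m) (j l : n) :
    A i j * A k l = A i l * A k j := by
  by_contra h
  have hdet : (A.submatrix ![i, k] ![j, l]).det ≠ 0 := by
    rw [det_fin_two]
    simpa [sub_eq_zero] using h
  have hsub := rank_submatrix_le A ![i, k] ![j, l]
  rw [rank_of_det_ne_zero hdet, Fintype.card_fin] at hsub
  omega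

end Rank

section Hermitian

variable {m n α : Type*} [Semiring α] [StarRing α]

theorem IsHermitian.apply_eq_mul_star {A : Matrix n n α} (hA : A.IsHermitian) {i j : n}
    {x y : α} (h : A i j = x * star y) : A j i = y * star x := by
  rw [← hA.apply j i, h, star_mul, star_star]

theorem IsHermitian.eq_vecMulVec_sumElim {A : Matrix (n ⊕ m) (n ⊕ m) α} (hA : A.IsHermitian)
    {x : n → α} {y : m → α}
    (h₀₀ : ∀ a b, A (Sum.inl a) (Sum.inl b) = x a * star (x b))
    (h₀₁ : ∀ a k, A (Sum.inl a) (Sum.inr k) = x a * star (y k))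
    (h₁₁ : ∀ k l, A (Sum.inr k) (Sum.inr l) = y k * star (y l)) :
    A = vecMulVec (Sum.elim x y) (star (Sum.elim x y)) := by
  ext (a | k) (b | l)
  · exact h₀₀ a b
  · exact h₀₁ a l
  · exact hA.apply_eq_mul_star (h₀₁ b k)
  · exact h₁₁ k l

end Hermitian

end Matrix

theorem psd_slack_block_rank_one_iff_general
    {m : Type*} [Fintype m]
    (W : Matrix (Fin 3 ⊕ m) (Fin 3 ⊕ m) ℂ) (hW : W.PosSemidef)
    (v : Fin 3 → ℂ) (hv : v ≠ 0)
    (hW00 : ∀ a b : Fin 3, W (Sum.inl a) (Sum.inl b) = v a * starRingEnd ℂ (v b))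
    (Vhat : m → ℂ) (Q : Matrix m m ℂ)
    (hW01 : ∀ (a : Fin 3) (k : m),
      W (Sum.inl a) (Sum.inr k) = v a * starRingEnd ℂ (Vhat k))
    (hW11 : ∀ k l : m,
      W (Sum.inr k) (Sum.inr l) = Vhat k * starRingEnd ℂ (Vhat l) + Q k l) :
    W.rank = 1 ↔ Q = 0 := by
  simp only [starRingEnd_apply] at hW00 hW01 hW11
  obtain ⟨b, hb⟩ : ∃ b, v b ≠ 0 := Function.ne_iff.mp hv
  have hWbb : W (Sum.inl b) (Sum.inl b) ≠ 0 := by simpa [hW00] using hb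
  constructor
  · intro hrank
    ext k l
    have hminor := W.mul_apply_eq_of_rank_le_one hrank.le (Sum.inl b) (Sum.inr k) (Sum.inl b)
      (Sum.inr l)
    rw [hW00, hW11, hW01, hW.isHermitian.apply_eq_mul_star (hW01 b k)] at hminor
    have hQkl : v b * star (v b) * Q k l = 0 := by linear_combination hminor
    simpa [hb] using hQkl
  · rintro rfl
    refine le_antisymm ?_ (W.one_le_rank_of_apply_ne_zero hWbb)
    rw [hW.isHermitian.eq_vecMulVec_sumElim hW00 hW01 (by simpa using hW11)]
    exact rank_vecMulVec_le _ _

/-- **Lemma 2 (rank characterization part).** Let `W` be a PSD matrix indexed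
by `Fin 3 ⊕ m` whose top-left block is `v vᴴ` for a nonzero `v`, and suppose
`V̂ : m → ℂ` and a PSD matrix `Q` satisfy `W₀₁ = v V̂ᴴ` and
`W₁₁ = V̂ V̂ᴴ + Q`. Then `rank W = 1` if and only if `Q = 0`. -/
theorem psd_slack_block_rank_one_iff
    {m : Type*} [Fintype m] [DecidableEq m]
    (W : Matrix (Fin 3 ⊕ m) (Fin 3 ⊕ m) ℂ) (hW : W.PosSemidef)
    (v : Fin 3 → ℂ) (hv : v ≠ 0)
    (hW00 : ∀ a b : Fin 3, W (Sum.inl a) (Sum.inl b) = v a * starRingEnd ℂ (v b))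
    (Vhat : m → ℂ) (Q : Matrix m m ℂ) (hQ : Q.PosSemidef)
    (hW01 : ∀ (a : Fin 3) (k : m),
      W (Sum.inl a) (Sum.inr k) = v a * starRingEnd ℂ (Vhat k))
    (hW11 : ∀ k l : m,
      W (Sum.inr k) (Sum.inr l) = Vhat k * starRingEnd ℂ (Vhat l) + Q k l) :
    W.rank = 1 ↔ Q = 0 :=
  psd_slack_block_rank_one_iff_general W hW v hv hW00 Vhat Q hW01 hW11
end
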